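/- For all n ≥ 0, spa'(2n+1) + spa'(4n+1) + spa'(8n+1) is odd. -/
import Mathlib


def spa' : ℕ → ℕ
  | 0 => 0
  | 1 => 1
  | n + 2 => if (n + 2) % 2 = 0 then spa' ((n + 2) / 2) else spa' n + spa' (n - 1)
decreasing_by all_goals omega

lemma spa'_even (n : ℕ) : spa' (2 * n) = spa' n := by
  match n with
  | 0 => rfl
  | m + 1 =>
    have h : 2 * (m + 1) = (2 * m) + 2 := by ring
    rw [h, spa']
    simp only [show (2 * m + 2) % 2 = 0 by omega, if_true]
    congr 1
    omega

lemma spa'_odd (n : ℕ) : spa' (2 * n + 3) = spa' (2 * n + 1) + spa' (2 * n) := by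
  have h : 2 * n + 3 = (2 * n + 1) + 2 := by ring
  rw [h, spa']
  rw [if_neg (by omega), Nat.add_sub_cancel]

lemma spa'_key (j : ℕ) : spa' (4 * j + 5) = spa' (4 * j + 1) + spa' (2 * j + 3) := by
  have h1 : spa' (4 * j + 5) = spa' (4 * j + 3) + spa' (4 * j + 2) := by
    have := spa'_odd (2 * j + 1); convert this using 2 <;> ring
  have h2 : spa' (4 * j + 3) = spa' (4 * j + 1) + spa' (4 * j) := by
    have := spa'_odd (2 * j); convert this using 2 <;> ring
  have h3 : spa' (4 * j + 2) = spa' (2 * j + 1) := by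
    have := spa'_even (2 * j + 1); convert this using 2; ring
  have h4 : spa' (4 * j) = spa' (2 * j) := by
    have := spa'_even (2 * j); convert this using 2; ring
  have h5 : spa' (2 * j + 3) = spa' (2 * j + 1) + spa' (2 * j) := spa'_odd j
  omega

theorem spa'_parity (n : ℕ) : Odd (spa' (2 * n + 1) + spa' (4 * n + 1) + spa' (8 * n + 1)) := by
  induction n with
  | zero =>
    have h1 : spa' 1 = 1 := by simp [spa']
    exact ⟨1, by norm_num [h1]⟩
  | succ m ih =>
    have a1 : 2 * (m + 1) + 1 = 2 * m + 3 := by ring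
    have a2 : 4 * (m + 1) + 1 = 4 * m + 5 := by ring
    have a3 : 8 * (m + 1) + 1 = 8 * m + 9 := by ring
    rw [a1, a2, a3]
    have e2 : spa' (8 * m + 9) = spa' (8 * m + 5) + spa' (4 * m + 5) := by
      have := spa'_key (2 * m + 1); convert this using 2 <;> ring
    have e3 : spa' (8 * m + 5) = spa' (8 * m + 1) + spa' (4 * m + 3) := by
      have := spa'_key (2 * m); convert this using 2 <;> ring
    have e4 : spa' (2 * m + 3) = spa' (2 * m + 1) + spa' (2 * m) := spa'_odd m
    have e5 : spa' (4 * m + 3) = spa' (4 * m + 1) + spa' (4 * m) := by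
      have := spa'_odd (2 * m); convert this using 2 <;> ring
    have e6 : spa' (4 * m) = spa' (2 * m) := by
      have := spa'_even (2 * m); convert this using 2; ring
    have e8 : spa' (4 * m + 5) = spa' (4 * m + 1) + spa' (2 * m + 3) := spa'_key m
    obtain ⟨k, hk⟩ := ih
    exact ⟨spa' (2 * m + 3) + spa' (4 * m + 1) + spa' (2 * m) + k, by omega⟩
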